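/- arXiv:2603.14270 — 10 statements merged into one kernel-verified Lean document; each statement's English description precedes it below -/
import Mathlib

section
/- Let T : H → H be an operator and λ ∈ (0,2]. Then T is a cutter if and only if its relaxation T_λ = (1-λ)Id + λT is ((2-λ)/λ)-strongly quasi-nonexpansive, i.e., ‖T_λ x - z‖² ≤ ‖x - z‖² - ((2-λ)/λ)‖T_λ x - x‖² for all x ∈ H and z ∈ Fix T. -/
open scoped RealInnerProductSpace

private lemma key_eq {H : Type*} [NormedAddCommGroup H] [InnerProductSpace ℝ H]
    (T : H → H) (l : ℝ) (hl0 : 0 < l) (x z : H) :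
    ‖((1 - l) • x + l • T x) - z‖ ^ 2
      + ((2 - l) / l) * ‖((1 - l) • x + l • T x) - x‖ ^ 2
    = ‖x - z‖ ^ 2 + 2 * l * ⟪z - T x, x - T x⟫ := by
  have e1 : ((1 - l) • x + l • T x) - z = (x - z) + l • (T x - x) := by
    rw [sub_smul, smul_sub, one_smul]; abel
  have e2 : ((1 - l) • x + l • T x) - x = l • (T x - x) := by
    rw [sub_smul, smul_sub, one_smul]; abel
  rw [e1, e2, norm_add_sq_real, norm_smul, real_inner_smul_right]
  have e3 : ⟪z - T x, x - T x⟫ = ⟪x - z, T x - x⟫ + ‖T x - x‖ ^ 2 := by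
    have : z - T x = -((x - z) + (T x - x)) := by abel
    rw [this, show x - T x = -(T x - x) by abel, inner_neg_neg, inner_add_left,
      real_inner_self_eq_norm_sq]
  rw [e3]
  have hl : l ≠ 0 := ne_of_gt hl0
  field_simp [Real.norm_eq_abs]
  rw [Real.norm_eq_abs, sq_abs]
  ring

/-- T is a cutter iff its λ-relaxation is ((2-λ)/λ)-strongly quasi-nonexpansive. -/
theorem cutter_iff_relaxation_sqne
    {H : Type*} [NormedAddCommGroup H] [InnerProductSpace ℝ H]
    (T : H → H) (l : ℝ) (hl0 : 0 < l) (hl2 : l ≤ 2) :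
    (∀ (x z : H), T z = z → ⟪z - T x, x - T x⟫ ≤ 0) ↔
    (∀ (x z : H), T z = z →
      ‖((1 - l) • x + l • T x) - z‖ ^ 2 ≤
        ‖x - z‖ ^ 2 - ((2 - l) / l) * ‖((1 - l) • x + l • T x) - x‖ ^ 2) := by
  constructor
  · intro h x z hz
    have hc := h x z hz
    have := key_eq T l hl0 x z
    nlinarith
  · intro h x z hz
    have hc := h x z hz
    have := key_eq T l hl0 x z
    nlinarith
end

section
/- Let U₁, ..., U_m : H → H be operators with U_i being ρ_i-strongly quasi-nonexpansive for ρ_i > 0, and suppose ⋂_{i=1}^m Fix U_i ≠ ∅. Let ρ := min_i ρ_i. Then any convex combination U := Σ_{i=1}^m ω_i U_i with ω_i ∈ (0,1], Σω_i = 1, is ρ-strongly quasi-nonexpansive, and the composition V := U_m ⋯ U₂U₁ is (ρ/m)-strongly quasi-nonexpansive. -/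
open scoped RealInnerProductSpace

/-- Iterated composition `compSeq U n = U_{n-1} ∘ ⋯ ∘ U_1 ∘ U_0` (indices below m). -/
def compSeq {H : Type*} {m : ℕ} (U : Fin m → H → H) : ℕ → H → H
  | 0 => id
  | n + 1 => fun x => if h : n < m then U ⟨n, h⟩ (compSeq U n x) else compSeq U n x

section Aux

variable {H : Type*} [NormedAddCommGroup H] [InnerProductSpace ℝ H]

/-- Jensen's inequality for the squared norm. -/
lemma jensen_norm_sq {ι : Type*} (s : Finset ι) (ω : ι → ℝ) (v : ι → H)
    (h0 : ∀ i ∈ s, 0 ≤ ω i) (h1 : ∑ i ∈ s, ω i = 1) :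
    ‖∑ i ∈ s, ω i • v i‖ ^ 2 ≤ ∑ i ∈ s, ω i * ‖v i‖ ^ 2 := by
  have h2 : ‖∑ i ∈ s, ω i • v i‖ ≤ ∑ i ∈ s, ω i * ‖v i‖ := by
    refine (norm_sum_le _ _).trans (le_of_eq (Finset.sum_congr rfl fun i hi => ?_))
    rw [norm_smul, Real.norm_eq_abs, abs_of_nonneg (h0 i hi)]
  calc ‖∑ i ∈ s, ω i • v i‖ ^ 2 ≤ (∑ i ∈ s, ω i * ‖v i‖) ^ 2 :=
        pow_le_pow_left₀ (norm_nonneg _) h2 2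
    _ ≤ ∑ i ∈ s, ω i * ‖v i‖ ^ 2 :=
        Real.pow_arith_mean_le_arith_mean_pow s ω _ h0 h1 (fun i _ => norm_nonneg _) 2

lemma compSeq_fixed {m : ℕ} (U : Fin m → H → H) {z : H} (hz : ∀ i, U i z = z) :
    ∀ n, compSeq U n z = z := by
  intro n
  induction n with
  | zero => rfl
  | succ n ih =>
    simp only [compSeq, ih]
    split <;> simp [hz]

lemma comp_descent {m : ℕ} (U : Fin m → H → H) (ρs : Fin m → ℝ)
    (hU : ∀ i, ∀ (x z : H), U i z = z →
      ‖U i x - z‖ ^ 2 ≤ ‖x - z‖ ^ 2 - ρs i * ‖U i x - x‖ ^ 2)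
    {ρ : ℝ} (hρle : ∀ i, ρ ≤ ρs i) {z : H} (hz : ∀ i, U i z = z) (x : H) :
    ∀ n, n ≤ m → ‖compSeq U n x - z‖ ^ 2 ≤ ‖x - z‖ ^ 2 -
      ρ * ∑ k ∈ Finset.range n, ‖compSeq U (k + 1) x - compSeq U k x‖ ^ 2 := by
  intro n
  induction n with
  | zero => intro _; simp [compSeq]
  | succ n ih =>
    intro hnm
    have hn : n < m := hnm
    have ihn := ih (le_of_lt hn)
    have step := hU ⟨n, hn⟩ (compSeq U n x) z (hz _)
    have hdef : compSeq U (n + 1) x = U ⟨n, hn⟩ (compSeq U n x) := by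
      simp [compSeq, hn]
    rw [← hdef] at step
    have hd : 0 ≤ ‖compSeq U (n + 1) x - compSeq U n x‖ ^ 2 := by positivity
    have hr : ρ * ‖compSeq U (n + 1) x - compSeq U n x‖ ^ 2 ≤
        ρs ⟨n, hn⟩ * ‖compSeq U (n + 1) x - compSeq U n x‖ ^ 2 :=
      mul_le_mul_of_nonneg_right (hρle _) hd
    rw [Finset.sum_range_succ, mul_add]
    linarith

end Aux

/-- Convex combinations and compositions of strongly quasi-nonexpansive operators with a
common fixed point are strongly quasi-nonexpansive with the stated constants. -/
theorem convComb_and_comp_sqne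
    {H : Type*} [NormedAddCommGroup H] [InnerProductSpace ℝ H]
    (m : ℕ) (hm : 0 < m) (U : Fin m → H → H) (ρs : Fin m → ℝ)
    (hρs : ∀ i, 0 < ρs i)
    (hU : ∀ i, ∀ (x z : H), U i z = z →
      ‖U i x - z‖ ^ 2 ≤ ‖x - z‖ ^ 2 - ρs i * ‖U i x - x‖ ^ 2)
    (hfix : ∃ z : H, ∀ i, U i z = z)
    (ρ : ℝ) (hρ : IsLeast (Set.range ρs) ρ)
    (ω : Fin m → ℝ) (hω : ∀ i, ω i ∈ Set.Ioc (0 : ℝ) 1) (hωs : ∑ i, ω i = 1) :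
    (∀ (x z : H), (∑ i, ω i • U i z) = z →
      ‖(∑ i, ω i • U i x) - z‖ ^ 2 ≤
        ‖x - z‖ ^ 2 - ρ * ‖(∑ i, ω i • U i x) - x‖ ^ 2) ∧
    (∀ (x z : H), compSeq U m z = z →
      ‖compSeq U m x - z‖ ^ 2 ≤
        ‖x - z‖ ^ 2 - (ρ / m) * ‖compSeq U m x - x‖ ^ 2) := by
  obtain ⟨w, hw⟩ := hfix
  obtain ⟨i0, hi0⟩ := hρ.1
  have hρpos : 0 < ρ := hi0 ▸ hρs i0
  have hρle : ∀ i, ρ ≤ ρs i := fun i => hρ.2 ⟨i, rfl⟩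
  have hω0 : ∀ i ∈ Finset.univ, (0:ℝ) ≤ ω i := fun i _ => (hω i).1.le
  -- key rewriting: ∑ ω i • f i - y = ∑ ω i • (f i - y)
  have hsub : ∀ (f : Fin m → H) (y : H),
      (∑ i, ω i • f i) - y = ∑ i, ω i • (f i - y) := by
    intro f y
    simp [smul_sub, Finset.sum_sub_distrib, ← Finset.sum_smul, hωs]
  -- generic estimate for the convex combination at a common fixed point
  have hcomb : ∀ (x z : H), (∀ i, U i z = z) →
      ‖(∑ i, ω i • U i x) - z‖ ^ 2 ≤
        ‖x - z‖ ^ 2 - ρ * ∑ i, ω i * ‖U i x - x‖ ^ 2 := by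
    intro x z hz
    have h1 : ‖(∑ i, ω i • U i x) - z‖ ^ 2 ≤ ∑ i, ω i * ‖U i x - z‖ ^ 2 := by
      rw [hsub]
      exact jensen_norm_sq _ _ _ hω0 hωs
    have h2 : ∑ i, ω i * ‖U i x - z‖ ^ 2 ≤
        ∑ i, ω i * (‖x - z‖ ^ 2 - ρs i * ‖U i x - x‖ ^ 2) :=
      Finset.sum_le_sum fun i _ =>
        mul_le_mul_of_nonneg_left (hU i x z (hz i)) (hω i).1.le
    have h3 : ∑ i, ω i * (‖x - z‖ ^ 2 - ρs i * ‖U i x - x‖ ^ 2) =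
        ‖x - z‖ ^ 2 - ∑ i, ω i * (ρs i * ‖U i x - x‖ ^ 2) := by
      simp [mul_sub, Finset.sum_sub_distrib, ← Finset.sum_mul, hωs]
    have h4 : ρ * ∑ i, ω i * ‖U i x - x‖ ^ 2 ≤
        ∑ i, ω i * (ρs i * ‖U i x - x‖ ^ 2) := by
      rw [Finset.mul_sum]
      refine Finset.sum_le_sum fun i _ => ?_
      have hωi := (hω i).1.le
      have hd : (0:ℝ) ≤ ‖U i x - x‖ ^ 2 := by positivity
      nlinarith [mul_le_mul_of_nonneg_left (hρle i) (mul_nonneg hωi hd)]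
    linarith
  constructor
  · intro x z hz
    -- z is a common fixed point
    have hzfix : ∀ i, U i z = z := by
      have h1 : ‖z - w‖ ^ 2 ≤ ∑ i, ω i * ‖U i z - w‖ ^ 2 := by
        have := jensen_norm_sq (H := H) Finset.univ ω (fun i => U i z - w) hω0 hωs
        rwa [← hsub, hz] at this
      have h2 : ∑ i, ω i * ‖U i z - w‖ ^ 2 ≤
          ‖z - w‖ ^ 2 - ∑ i, ω i * (ρs i * ‖U i z - z‖ ^ 2) := by
        have h2' : ∑ i, ω i * ‖U i z - w‖ ^ 2 ≤
            ∑ i, ω i * (‖z - w‖ ^ 2 - ρs i * ‖U i z - z‖ ^ 2) :=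
          Finset.sum_le_sum fun i _ =>
            mul_le_mul_of_nonneg_left (hU i z w (hw i)) (hω i).1.le
        have h3 : ∑ i, ω i * (‖z - w‖ ^ 2 - ρs i * ‖U i z - z‖ ^ 2) =
            ‖z - w‖ ^ 2 - ∑ i, ω i * (ρs i * ‖U i z - z‖ ^ 2) := by
          simp [mul_sub, Finset.sum_sub_distrib, ← Finset.sum_mul, hωs]
        linarith
      have hsum0 : ∑ i, ω i * (ρs i * ‖U i z - z‖ ^ 2) ≤ 0 := by linarith
      have hterm : ∀ i ∈ Finset.univ, (0:ℝ) ≤ ω i * (ρs i * ‖U i z - z‖ ^ 2) := by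
        intro i _
        have := (hω i).1.le
        have := (hρs i).le
        positivity
      have hsume : ∑ i, ω i * (ρs i * ‖U i z - z‖ ^ 2) = 0 :=
        le_antisymm hsum0 (Finset.sum_nonneg hterm)
      intro i
      have hi := (Finset.sum_eq_zero_iff_of_nonneg hterm).1 hsume i (Finset.mem_univ i)
      have hωi := (hω i).1
      have hρi := hρs i
      have : ‖U i z - z‖ ^ 2 = 0 := by
        by_contra h
        have h0 : 0 < ‖U i z - z‖ ^ 2 :=
          lt_of_le_of_ne (by positivity) (Ne.symm h)
        nlinarith [mul_pos hωi (mul_pos hρi h0)]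
      have := pow_eq_zero_iff (n := 2) (by norm_num) |>.1 this
      rw [norm_eq_zero, sub_eq_zero] at this
      exact this
    have hmain := hcomb x z hzfix
    have hlast : ρ * ‖(∑ i, ω i • U i x) - x‖ ^ 2 ≤
        ρ * ∑ i, ω i * ‖U i x - x‖ ^ 2 := by
      refine mul_le_mul_of_nonneg_left ?_ hρpos.le
      rw [hsub]
      exact jensen_norm_sq _ _ _ hω0 hωs
    linarith
  · intro x z hz
    -- z is a common fixed point
    have hzfix : ∀ i, U i z = z := by
      have hA := comp_descent U ρs hU hρle hw z m le_rfl
      rw [hz] at hA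
      have hsum0 : ∑ k ∈ Finset.range m, ‖compSeq U (k + 1) z - compSeq U k z‖ ^ 2 ≤ 0 := by
        nlinarith
      have hterm : ∀ k ∈ Finset.range m,
          (0:ℝ) ≤ ‖compSeq U (k + 1) z - compSeq U k z‖ ^ 2 := fun k _ => by positivity
      have hsume := le_antisymm hsum0 (Finset.sum_nonneg hterm)
      have hstep : ∀ k ∈ Finset.range m, compSeq U (k + 1) z = compSeq U k z := by
        intro k hk
        have := (Finset.sum_eq_zero_iff_of_nonneg hterm).1 hsume k hk
        have := pow_eq_zero_iff (n := 2) (by norm_num) |>.1 this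
        rw [norm_eq_zero, sub_eq_zero] at this
        exact this
      have hcs : ∀ k, k ≤ m → compSeq U k z = z := by
        intro k
        induction k with
        | zero => intro _; rfl
        | succ k ih =>
          intro hk
          have hkm : k < m := hk
          rw [hstep k (Finset.mem_range.2 hkm), ih (le_of_lt hkm)]
      intro i
      have h1 : compSeq U (i.1 + 1) z = U i (compSeq U i.1 z) := by
        simp [compSeq, i.2]
      rw [hcs i.1 i.2.le] at h1
      rw [← h1, hcs (i.1 + 1) i.2]
    -- main estimate
    have hA := comp_descent U ρs hU hρle hzfix x m le_rfl
    set S := ∑ k ∈ Finset.range m, ‖compSeq U (k + 1) x - compSeq U k x‖ ^ 2 with hS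
    have hSnn : 0 ≤ S := Finset.sum_nonneg fun k _ => by positivity
    have hB : ‖compSeq U m x - x‖ ^ 2 ≤ m * S := by
      have htel : compSeq U m x - x =
          ∑ k ∈ Finset.range m, (compSeq U (k + 1) x - compSeq U k x) := by
        rw [Finset.sum_range_sub (fun k => compSeq U k x)]
        rfl
      calc ‖compSeq U m x - x‖ ^ 2
          = ‖∑ k ∈ Finset.range m, (compSeq U (k + 1) x - compSeq U k x)‖ ^ 2 := by
            rw [htel]
        _ ≤ (∑ k ∈ Finset.range m, ‖compSeq U (k + 1) x - compSeq U k x‖) ^ 2 :=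
            pow_le_pow_left₀ (norm_nonneg _) (norm_sum_le _ _) 2
        _ ≤ (Finset.range m).card * S := sq_sum_le_card_mul_sum_sq
        _ = m * S := by rw [Finset.card_range]
    have hmR : (0:ℝ) < m := by exact_mod_cast hm
    have hlast : (ρ / m) * ‖compSeq U m x - x‖ ^ 2 ≤ ρ * S := by
      have h1 : (ρ / m) * ‖compSeq U m x - x‖ ^ 2 ≤ (ρ / m) * (m * S) :=
        mul_le_mul_of_nonneg_left hB (by positivity)
      have h2 : (ρ / m) * (m * S) = ρ * S := by
        field_simp
      linarith
    linarith
end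

section
/- Let U₁, ..., U_m : H → H with U_i being ρ_i-firmly nonexpansive for ρ_i ≥ 0, and let ρ := min_i ρ_i. Then (i) for weights ω_i ∈ [0,1] with Σω_i = 1, the convex combination U := Σ ω_i U_i is ρ-firmly nonexpansive; (ii) the composition V := U_m ⋯ U₂U₁ is (ρ/m)-firmly nonexpansive. -/
open scoped RealInnerProductSpace

/-- Jensen's inequality for the squared norm over a finite convex combination. -/
lemma jensen_norm_sq_s8 {H : Type*} [NormedAddCommGroup H] [NormedSpace ℝ H]
    {ι : Type*} [Fintype ι] (w : ι → ℝ) (v : ι → H)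
    (hw : ∀ i, 0 ≤ w i) (hws : ∑ i, w i = 1) :
    ‖∑ i, w i • v i‖ ^ 2 ≤ ∑ i, w i * ‖v i‖ ^ 2 := by
  have h1 : ‖∑ i, w i • v i‖ ≤ ∑ i, w i * ‖v i‖ := by
    refine (norm_sum_le _ _).trans_eq ?_
    refine Finset.sum_congr rfl fun i _ => ?_
    rw [norm_smul, Real.norm_eq_abs, abs_of_nonneg (hw i)]
  have h2 : (∑ i, w i * ‖v i‖) ^ 2 ≤ ∑ i, w i * ‖v i‖ ^ 2 := by
    have := Finset.sum_mul_sq_le_sq_mul_sq Finset.univ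
      (fun i => Real.sqrt (w i)) (fun i => Real.sqrt (w i) * ‖v i‖)
    have e1 : ∀ i, Real.sqrt (w i) * (Real.sqrt (w i) * ‖v i‖) = w i * ‖v i‖ := by
      intro i
      rw [← mul_assoc, Real.mul_self_sqrt (hw i)]
    have e2 : ∀ i, Real.sqrt (w i) ^ 2 = w i := fun i => Real.sq_sqrt (hw i)
    have e3 : ∀ i, (Real.sqrt (w i) * ‖v i‖) ^ 2 = w i * ‖v i‖ ^ 2 := by
      intro i; rw [mul_pow, e2]
    simp only [e1, e2, e3, hws, one_mul] at this
    exact this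
  calc ‖∑ i, w i • v i‖ ^ 2 ≤ (∑ i, w i * ‖v i‖) ^ 2 := by
        apply pow_le_pow_left₀ (norm_nonneg _) h1
    _ ≤ _ := h2

/-- Convex combinations and compositions of ρᵢ-firmly nonexpansive operators are
ρ-firmly, resp. (ρ/m)-firmly, nonexpansive, where ρ = min ρᵢ. -/
theorem convComb_and_comp_firmly_nonexpansive
    {H : Type*} [NormedAddCommGroup H] [InnerProductSpace ℝ H]
    (m : ℕ) (hm : 0 < m) (U : Fin m → H → H) (ρs : Fin m → ℝ)
    (hρs : ∀ i, 0 ≤ ρs i)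
    (hU : ∀ i, ∀ x y : H, ‖U i x - U i y‖ ^ 2 ≤
      ‖x - y‖ ^ 2 - ρs i * ‖(x - U i x) - (y - U i y)‖ ^ 2)
    (ρ : ℝ) (hρ : IsLeast (Set.range ρs) ρ)
    (ω : Fin m → ℝ) (hω : ∀ i, ω i ∈ Set.Icc (0 : ℝ) 1) (hωs : ∑ i, ω i = 1) :
    (∀ x y : H,
      ‖(∑ i, ω i • U i x) - (∑ i, ω i • U i y)‖ ^ 2 ≤
        ‖x - y‖ ^ 2 - ρ *
          ‖(x - ∑ i, ω i • U i x) - (y - ∑ i, ω i • U i y)‖ ^ 2) ∧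
    (∀ x y : H,
      ‖compSeq U m x - compSeq U m y‖ ^ 2 ≤
        ‖x - y‖ ^ 2 - (ρ / m) *
          ‖(x - compSeq U m x) - (y - compSeq U m y)‖ ^ 2) := by
  -- basic facts about ρ
  have hρ0 : 0 ≤ ρ := by
    obtain ⟨i, hi⟩ := hρ.1
    exact hi ▸ hρs i
  have hρle : ∀ i, ρ ≤ ρs i := fun i => hρ.2 ⟨i, rfl⟩
  -- each U i is ρ-firmly nonexpansive
  have hU' : ∀ i, ∀ x y : H, ‖U i x - U i y‖ ^ 2 ≤
      ‖x - y‖ ^ 2 - ρ * ‖(x - U i x) - (y - U i y)‖ ^ 2 := by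
    intro i x y
    refine (hU i x y).trans ?_
    have := mul_le_mul_of_nonneg_right (hρle i) (sq_nonneg ‖(x - U i x) - (y - U i y)‖)
    linarith
  constructor
  · -- convex combination
    intro x y
    set e : Fin m → H := fun i => (x - U i x) - (y - U i y) with he
    have key1 : ‖(∑ i, ω i • U i x) - (∑ i, ω i • U i y)‖ ^ 2 ≤
        ‖x - y‖ ^ 2 - ρ * ∑ i, ω i * ‖e i‖ ^ 2 := by
      have heq : (∑ i, ω i • U i x) - (∑ i, ω i • U i y)
          = ∑ i, ω i • (U i x - U i y) := by
        rw [← Finset.sum_sub_distrib]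
        exact Finset.sum_congr rfl fun i _ => (smul_sub _ _ _).symm
      rw [heq]
      refine (jensen_norm_sq_s8 ω _ (fun i => (hω i).1) hωs).trans ?_
      have : ∑ i, ω i * ‖U i x - U i y‖ ^ 2 ≤
          ∑ i, ω i * (‖x - y‖ ^ 2 - ρ * ‖e i‖ ^ 2) :=
        Finset.sum_le_sum fun i _ =>
          mul_le_mul_of_nonneg_left (hU' i x y) (hω i).1
      refine this.trans_eq ?_
      simp only [mul_sub, Finset.sum_sub_distrib, ← Finset.sum_mul,
        ← Finset.mul_sum, hωs, one_mul]
      ring_nf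
      rw [Finset.mul_sum]
      congr 1
      exact Finset.sum_congr rfl fun i _ => by ring
    have key2 : ‖(x - ∑ i, ω i • U i x) - (y - ∑ i, ω i • U i y)‖ ^ 2 ≤
        ∑ i, ω i * ‖e i‖ ^ 2 := by
      have heq : (x - ∑ i, ω i • U i x) - (y - ∑ i, ω i • U i y) = ∑ i, ω i • e i := by
        have hx : x = ∑ i, ω i • x := by
          rw [← Finset.sum_smul, hωs, one_smul]
        have hy : y = ∑ i, ω i • y := by
          rw [← Finset.sum_smul, hωs, one_smul]
        calc (x - ∑ i, ω i • U i x) - (y - ∑ i, ω i • U i y)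
            = ((∑ i, ω i • x) - ∑ i, ω i • U i x) - ((∑ i, ω i • y) - ∑ i, ω i • U i y) := by
              rw [← hx, ← hy]
          _ = ∑ i, ω i • e i := by
              simp only [← Finset.sum_sub_distrib, he, smul_sub]
      rw [heq]
      exact jensen_norm_sq_s8 ω e (fun i => (hω i).1) hωs
    have := mul_le_mul_of_nonneg_left key2 hρ0
    linarith
  · -- composition
    intro x y
    -- residuals
    set d : ℕ → H := fun n =>
      if h : n < m then
        ((compSeq U n x - U ⟨n, h⟩ (compSeq U n x)) -
          (compSeq U n y - U ⟨n, h⟩ (compSeq U n y)))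
      else 0 with hd
    -- telescoping
    have tele : ∀ n, n ≤ m →
        (x - compSeq U n x) - (y - compSeq U n y) = ∑ i ∈ Finset.range n, d i := by
      intro n
      induction n with
      | zero => intro _; simp [compSeq]
      | succ k ih =>
        intro hk
        have hkm : k < m := hk
        rw [Finset.sum_range_succ, ← ih (le_of_lt hkm)]
        simp only [compSeq, dif_pos hkm, hd, dif_pos hkm]
        abel
    -- main induction
    have main : ∀ n, n ≤ m →
        ‖compSeq U n x - compSeq U n y‖ ^ 2 ≤
          ‖x - y‖ ^ 2 - ρ * ∑ i ∈ Finset.range n, ‖d i‖ ^ 2 := by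
      intro n
      induction n with
      | zero => intro _; simp [compSeq]
      | succ k ih =>
        intro hk
        have hkm : k < m := hk
        have hstep := hU' ⟨k, hkm⟩ (compSeq U k x) (compSeq U k y)
        have hdk : d k = (compSeq U k x - U ⟨k, hkm⟩ (compSeq U k x)) -
            (compSeq U k y - U ⟨k, hkm⟩ (compSeq U k y)) := by
          simp only [hd, dif_pos hkm]
        rw [Finset.sum_range_succ]
        have ihk := ih (le_of_lt hkm)
        simp only [compSeq, dif_pos hkm]
        rw [hdk] at *
        nlinarith [hstep, ihk]
    have hmain := main m le_rfl
    have htele := tele m le_rfl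
    -- Cauchy-Schwarz : ‖∑ d i‖² ≤ m * ∑ ‖d i‖²
    have hcs : ‖∑ i ∈ Finset.range m, d i‖ ^ 2 ≤
        (m : ℝ) * ∑ i ∈ Finset.range m, ‖d i‖ ^ 2 := by
      have hm' : (0 : ℝ) < m := Nat.cast_pos.mpr hm
      have hj := jensen_norm_sq_s8 (ι := Fin m) (fun _ => (m : ℝ)⁻¹) (fun i => d i)
        (fun _ => by positivity) (by simp [Finset.sum_const, Finset.card_univ]; field_simp)
      have e1 : ∑ i : Fin m, (m : ℝ)⁻¹ • d (i : ℕ) = (m : ℝ)⁻¹ • ∑ i ∈ Finset.range m, d i := by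
        rw [Finset.smul_sum, ← Fin.sum_univ_eq_sum_range]
      have e2 : ∑ i : Fin m, (m : ℝ)⁻¹ * ‖d (i : ℕ)‖ ^ 2
          = (m : ℝ)⁻¹ * ∑ i ∈ Finset.range m, ‖d i‖ ^ 2 := by
        rw [Finset.mul_sum, ← Fin.sum_univ_eq_sum_range (fun i => (m : ℝ)⁻¹ * ‖d i‖ ^ 2)]
      rw [e1, e2, norm_smul, mul_pow, Real.norm_eq_abs, abs_of_nonneg (by positivity)] at hj
      calc ‖∑ i ∈ Finset.range m, d i‖ ^ 2
          = (m : ℝ) ^ 2 * ((m : ℝ)⁻¹ ^ 2 * ‖∑ i ∈ Finset.range m, d i‖ ^ 2) := by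
            field_simp
        _ ≤ (m : ℝ) ^ 2 * ((m : ℝ)⁻¹ * ∑ i ∈ Finset.range m, ‖d i‖ ^ 2) :=
            mul_le_mul_of_nonneg_left hj (sq_nonneg _)
        _ = (m : ℝ) * ∑ i ∈ Finset.range m, ‖d i‖ ^ 2 := by
            field_simp
    rw [htele]
    have hm' : (0 : ℝ) < m := Nat.cast_pos.mpr hm
    have h1 : (ρ / m) * ‖∑ i ∈ Finset.range m, d i‖ ^ 2 ≤
        ρ * ∑ i ∈ Finset.range m, ‖d i‖ ^ 2 := by
      have := mul_le_mul_of_nonneg_left hcs (div_nonneg hρ0 hm'.le)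
      calc (ρ / m) * ‖∑ i ∈ Finset.range m, d i‖ ^ 2
          ≤ (ρ / m) * ((m : ℝ) * ∑ i ∈ Finset.range m, ‖d i‖ ^ 2) := this
        _ = ρ * ∑ i ∈ Finset.range m, ‖d i‖ ^ 2 := by field_simp
    linarith
end

section
/- Let U₁,...,U_m : H → H be ρ_i-strongly quasi-nonexpansive with ρ_i > 0 and ⋂_{i=1}^m Fix U_i ≠ ∅. Let U := Σ_{i=1}^m ω_i U_i with ω_i ∈ (0,1], Σω_i = 1. Then for any x ∈ H, z ∈ ⋂ Fix U_i, and any R ≥ ‖x - z‖ with R > 0: (1/(2R)) Σ_{i=1}^m ω_i ρ_i ‖U_i x - x‖² ≤ ‖U x - x‖. -/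
open scoped RealInnerProductSpace

/-- Lower bound for the displacement of a convex combination of strongly
quasi-nonexpansive operators. -/
theorem convComb_displacement_bound
    {H : Type*} [NormedAddCommGroup H] [InnerProductSpace ℝ H]
    (m : ℕ) (hm : 0 < m) (U : Fin m → H → H) (ρs : Fin m → ℝ)
    (hρs : ∀ i, 0 < ρs i)
    (hU : ∀ i, ∀ (x z : H), U i z = z →
      ‖U i x - z‖ ^ 2 ≤ ‖x - z‖ ^ 2 - ρs i * ‖U i x - x‖ ^ 2)
    (ω : Fin m → ℝ) (hω : ∀ i, ω i ∈ Set.Ioc (0 : ℝ) 1) (hωs : ∑ i, ω i = 1)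
    (x z : H) (hz : ∀ i, U i z = z) (R : ℝ) (hR : 0 < R) (hxz : ‖x - z‖ ≤ R) :
    (1 / (2 * R)) * ∑ i, ω i * ρs i * ‖U i x - x‖ ^ 2 ≤
      ‖(∑ i, ω i • U i x) - x‖ := by
  set Ux := ∑ i, ω i • U i x with hUx
  have hdiff : Ux - x = ∑ i, ω i • (U i x - x) := by
    rw [hUx]
    simp [smul_sub, Finset.sum_sub_distrib, ← Finset.sum_smul, hωs]
  have key : ∀ i, ρs i * ‖U i x - x‖ ^ 2 ≤ 2 * ⟪U i x - x, z - x⟫ := by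
    intro i
    have h1 := hU i x z (hz i)
    have hexp : ‖U i x - z‖ ^ 2 =
        ‖U i x - x‖ ^ 2 + 2 * ⟪U i x - x, x - z⟫ + ‖x - z‖ ^ 2 := by
      have : U i x - z = (U i x - x) + (x - z) := by abel
      rw [this, norm_add_sq_real]
    have hflip : ⟪U i x - x, z - x⟫ = - ⟪U i x - x, x - z⟫ := by
      rw [← inner_neg_right]; congr 1; abel
    nlinarith [sq_nonneg ‖U i x - x‖]
  have hsum : ∑ i, ω i * ρs i * ‖U i x - x‖ ^ 2 ≤ 2 * ⟪Ux - x, z - x⟫ := by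
    rw [hdiff, sum_inner]
    rw [Finset.mul_sum]
    apply Finset.sum_le_sum
    intro i _
    have hωi := (hω i).1
    have := mul_le_mul_of_nonneg_left (key i) hωi.le
    rw [real_inner_smul_left]
    nlinarith
  have hcs : ⟪Ux - x, z - x⟫ ≤ ‖Ux - x‖ * R := by
    calc ⟪Ux - x, z - x⟫ ≤ ‖Ux - x‖ * ‖z - x‖ := real_inner_le_norm _ _
    _ ≤ ‖Ux - x‖ * R := by
        have : ‖z - x‖ = ‖x - z‖ := norm_sub_rev _ _
        exact mul_le_mul_of_nonneg_left (this ▸ hxz) (norm_nonneg _)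
  rw [div_mul_eq_mul_div, one_mul, div_le_iff₀ (by positivity)]
  calc ∑ i, ω i * ρs i * ‖U i x - x‖ ^ 2 ≤ 2 * ⟪Ux - x, z - x⟫ := hsum
  _ ≤ 2 * (‖Ux - x‖ * R) := by linarith
  _ = ‖Ux - x‖ * (2 * R) := by ring
end

section
/- Let U₁,...,U_m : H → H be ρ_i-strongly quasi-nonexpansive with ρ_i > 0 and ⋂_{i=1}^m Fix U_i ≠ ∅. Let V := U_m U_{m-1} ⋯ U₁ and S_i := U_i U_{i-1} ⋯ U₁ (with S_0 = Id). Then for any x ∈ H, z ∈ ⋂ Fix U_i, and any positive R ≥ ‖x - z‖: (1/(2R)) Σ_{i=1}^m ρ_i ‖S_i x - S_{i-1} x‖² ≤ ‖V x - x‖. -/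
open scoped RealInnerProductSpace

/-- Lower bound for the displacement of a composition of strongly
quasi-nonexpansive operators. -/
theorem comp_displacement_bound
    {H : Type*} [NormedAddCommGroup H] [InnerProductSpace ℝ H]
    (m : ℕ) (hm : 0 < m) (U : Fin m → H → H) (ρs : Fin m → ℝ)
    (hρs : ∀ i, 0 < ρs i)
    (hU : ∀ i, ∀ (x z : H), U i z = z →
      ‖U i x - z‖ ^ 2 ≤ ‖x - z‖ ^ 2 - ρs i * ‖U i x - x‖ ^ 2)
    (x z : H) (hz : ∀ i, U i z = z) (R : ℝ) (hR : 0 < R) (hxz : ‖x - z‖ ≤ R) :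
    (1 / (2 * R)) *
        ∑ i : Fin m, ρs i * ‖compSeq U (i + 1) x - compSeq U i x‖ ^ 2 ≤
      ‖compSeq U m x - x‖ := by
  have hfix : ∀ n, compSeq U n z = z := by
    intro n
    induction n with
    | zero => rfl
    | succ k ih => by_cases h : k < m <;> simp [compSeq, h, ih, hz]
  set g : ℕ → ℝ := fun i =>
    if h : i < m then ρs ⟨i, h⟩ * ‖compSeq U (i + 1) x - compSeq U i x‖ ^ 2 else 0 with hg
  have hgnn : ∀ i, 0 ≤ g i := by
    intro i
    simp only [hg]
    split
    · exact mul_nonneg (hρs _).le (by positivity)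
    · exact le_rfl
  have key : ∀ n, n ≤ m →
      ‖compSeq U n x - z‖ ^ 2 + ∑ i ∈ Finset.range n, g i ≤ ‖x - z‖ ^ 2 := by
    intro n hn
    induction n with
    | zero => simp [compSeq]
    | succ k ih =>
      have hk : k < m := hn
      have ih' := ih hk.le
      have hstep := hU ⟨k, hk⟩ (compSeq U k x) z (hz _)
      have hS : compSeq U (k + 1) x = U ⟨k, hk⟩ (compSeq U k x) := by
        simp [compSeq, hk]
      rw [Finset.sum_range_succ]
      simp only [hg]
      rw [dif_pos hk, hS]
      linarith
  have hsum : (∑ i : Fin m, ρs i * ‖compSeq U (i + 1) x - compSeq U i x‖ ^ 2)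
      = ∑ i ∈ Finset.range m, g i := by
    rw [← Fin.sum_univ_eq_sum_range]
    refine Finset.sum_congr rfl fun i _ => ?_
    simp only [hg]
    rw [dif_pos i.isLt]
  have h1 := key m le_rfl
  rw [hsum]
  set a := ‖x - z‖
  set b := ‖compSeq U m x - z‖
  set d := ‖compSeq U m x - x‖
  have hsnn : 0 ≤ ∑ i ∈ Finset.range m, g i := Finset.sum_nonneg fun i _ => hgnn i
  have hb : 0 ≤ b := norm_nonneg _
  have ha : 0 ≤ a := norm_nonneg _
  have hd : 0 ≤ d := norm_nonneg _
  have hba : b ≤ a := by nlinarith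
  have h2 : a - b ≤ d := by
    have := norm_sub_norm_le (x - z) (compSeq U m x - z)
    have he : x - z - (compSeq U m x - z) = -(compSeq U m x - x) := by abel
    rw [he, norm_neg] at this
    linarith
  have h3 : ∑ i ∈ Finset.range m, g i ≤ 2 * R * d := by nlinarith
  rw [div_mul_eq_mul_div, one_mul, div_le_iff₀ (by positivity)]
  nlinarith
end

section
/- If {C_i}_{i ∈ I} is a family of nonempty, closed and convex subsets of a real Hilbert space H with nonempty intersection C, and there exists i₀ ∈ I such that C_{i₀} is locally compact in the norm topology (in particular, if H is finite-dimensional), then the family {C_i} is boundedly regular: for any bounded sequence {x^k} in H, if d(x^k, C_i) → 0 for each i ∈ I, then d(x^k, C) → 0. -/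
open Filter Metric

lemma aux_compact_ball {H : Type*} [NormedAddCommGroup H] [NormedSpace ℝ H]
    {s : Set H} (hs : Convex ℝ s) (hc : IsClosed s)
    (hlc : LocallyCompactSpace s) {y₀ : H} (hy₀ : y₀ ∈ s) (R : ℝ) :
    IsCompact (closedBall y₀ R ∩ s) := by
  obtain ⟨K, hKc, hKn⟩ := exists_compact_mem_nhds (⟨y₀, hy₀⟩ : s)
  have hK'c : IsCompact ((↑) '' K : Set H) := hKc.image continuous_subtype_val
  have hmem : ((↑) '' K : Set H) ∈ nhdsWithin y₀ s := by
    rw [nhdsWithin_eq_map_subtype_coe hy₀]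
    exact mem_map.2 (Filter.mem_of_superset hKn (fun z hz => ⟨z, hz, rfl⟩))
  obtain ⟨ε, hε, hsub⟩ := Metric.mem_nhdsWithin_iff.1 hmem
  set r := ε / 2 with hr
  have hrpos : 0 < r := by positivity
  have hsub' : closedBall y₀ r ∩ s ⊆ ((↑) '' K : Set H) := by
    intro z hz
    exact hsub ⟨lt_of_le_of_lt (mem_closedBall.1 hz.1) (by simp [hr]; linarith), hz.2⟩
  set c : ℝ := r / max R r with hc'
  have hmaxpos : 0 < max R r := lt_of_lt_of_le hrpos (le_max_right _ _)
  have hcpos : 0 < c := div_pos hrpos hmaxpos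
  have hc1 : c ≤ 1 := (div_le_one hmaxpos).2 (le_max_right _ _)
  set f : H → H := fun z => y₀ + c • (z - y₀) with hf
  set g : H → H := fun z => y₀ + c⁻¹ • (z - y₀) with hg
  have hgf : ∀ z, g (f z) = z := by
    intro z
    simp [hf, hg, smul_smul, inv_mul_cancel₀ hcpos.ne']
  have hgc : Continuous g := by
    rw [hg]
    exact continuous_const.add ((continuous_id.sub continuous_const).const_smul _)
  have himg : IsCompact (g '' ((↑) '' K : Set H)) := hK'c.image hgc
  apply IsCompact.of_isClosed_subset himg ((Metric.isClosed_closedBall.inter hc))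
  intro z hz
  have hfz : f z ∈ closedBall y₀ r ∩ s := by
    constructor
    · rw [mem_closedBall]
      have : dist (f z) y₀ = c * dist z y₀ := by
        simp [hf, dist_eq_norm, norm_smul, abs_of_pos hcpos]
      rw [this]
      calc c * dist z y₀ ≤ c * max R r := by
            apply mul_le_mul_of_nonneg_left _ hcpos.le
            exact le_trans (mem_closedBall.1 hz.1) (le_max_left _ _)
        _ = r := by rw [hc']; field_simp [hmaxpos.ne']
    · have : f z = (1 - c) • y₀ + c • z := by
        simp [hf, smul_sub, sub_smul]; abel
      rw [this]
      exact hs hy₀ hz.2 (by linarith) hcpos.le (by ring)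
  exact ⟨f z, hsub' hfz, hgf z⟩

/-- If one member of a family of nonempty closed convex sets with nonempty intersection
is locally compact (e.g. when H is finite-dimensional), the family is boundedly regular. -/
theorem locally_compact_implies_boundedly_regular
    {H : Type*} [NormedAddCommGroup H] [InnerProductSpace ℝ H] [CompleteSpace H]
    {I : Type*} [Nonempty I]
    (C : I → Set H) (hCne : ∀ i, (C i).Nonempty)
    (hCc : ∀ i, IsClosed (C i)) (hCv : ∀ i, Convex ℝ (C i))
    (hne : (⋂ i, C i).Nonempty)
    (i₀ : I) (hlc : LocallyCompactSpace (C i₀))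
    (x : ℕ → H) (hb : Bornology.IsBounded (Set.range x))
    (hd : ∀ i, Tendsto (fun k => Metric.infDist (x k) (C i)) atTop (nhds 0)) :
    Tendsto (fun k => Metric.infDist (x k) (⋂ i, C i)) atTop (nhds 0) := by
  obtain ⟨z, hz⟩ := hne
  have hzi : ∀ i, z ∈ C i := fun i => Set.mem_iInter.1 hz i
  obtain ⟨r, hr⟩ := hb.subset_closedBall z
  have hxr : ∀ k, dist (x k) z ≤ r := fun k => mem_closedBall.1 (hr (Set.mem_range_self k))
  apply Filter.tendsto_of_subseq_tendsto
  intro ns hns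
  have hsel : ∀ k : ℕ, ∃ y ∈ C i₀,
      dist (x (ns k)) y < infDist (x (ns k)) (C i₀) + 1/(k+1) := by
    intro k
    apply (Metric.infDist_lt_iff (hCne i₀)).1
    have : (0:ℝ) < 1/(k+1) := by positivity
    linarith
  choose y hy hydist using hsel
  have hyb : ∀ k, y k ∈ closedBall z (2*r+1) ∩ C i₀ := by
    intro k
    refine ⟨mem_closedBall.2 ?_, hy k⟩
    have h1 : infDist (x (ns k)) (C i₀) ≤ dist (x (ns k)) z :=
      Metric.infDist_le_dist_of_mem (hzi i₀)
    have h2 : (1:ℝ)/(k+1) ≤ 1 := by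
      rw [div_le_one (by positivity)]
      linarith [Nat.cast_nonneg (α := ℝ) k]
    calc dist (y k) z ≤ dist (y k) (x (ns k)) + dist (x (ns k)) z := dist_triangle _ _ _
      _ ≤ (infDist (x (ns k)) (C i₀) + 1/(k+1)) + r := by
          rw [dist_comm]; exact add_le_add (hydist k).le (hxr _)
      _ ≤ 2*r+1 := by linarith [hxr (ns k)]
  obtain ⟨a, ha, φ, hφ, hconv⟩ :=
    (aux_compact_ball (hCv i₀) (hCc i₀) hlc (hzi i₀) (2*r+1)).tendsto_subseq hyb
  have hφtop : Tendsto (fun j => ns (φ j)) atTop atTop := hns.comp hφ.tendsto_atTop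
  have hd0 : Tendsto (fun j => dist (x (ns (φ j))) (y (φ j))) atTop (nhds 0) := by
    have h1 : Tendsto (fun j => infDist (x (ns (φ j))) (C i₀)) atTop (nhds 0) :=
      (hd i₀).comp hφtop
    have h2 : Tendsto (fun j => (1:ℝ)/(φ j + 1)) atTop (nhds 0) :=
      tendsto_one_div_add_atTop_nhds_zero_nat.comp hφ.tendsto_atTop
    have hup : Tendsto (fun j => infDist (x (ns (φ j))) (C i₀) + 1/(φ j + 1))
        atTop (nhds 0) := by simpa using h1.add h2
    exact squeeze_zero (fun j => dist_nonneg) (fun j => (hydist (φ j)).le) hup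
  have hxconv : Tendsto (fun j => x (ns (φ j))) atTop (nhds a) := by
    rw [tendsto_iff_dist_tendsto_zero]
    apply squeeze_zero (fun j => dist_nonneg)
      (fun j => dist_triangle (x (ns (φ j))) (y (φ j)) a)
    have hya : Tendsto (fun j => dist (y (φ j)) a) atTop (nhds 0) := by
      have := hconv
      rw [tendsto_iff_dist_tendsto_zero] at this
      exact this
    simpa using hd0.add hya
  have haI : a ∈ ⋂ i, C i := by
    refine Set.mem_iInter.2 fun i => ((hCc i).mem_iff_infDist_zero (hCne i)).2 ?_
    have h1 : Tendsto (fun j => infDist (x (ns (φ j))) (C i)) atTop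
        (nhds (infDist a (C i))) := ((continuous_infDist_pt (C i)).tendsto a).comp hxconv
    have h2 : Tendsto (fun j => infDist (x (ns (φ j))) (C i)) atTop (nhds 0) :=
      (hd i).comp hφtop
    exact tendsto_nhds_unique h1 h2
  refine ⟨φ, ?_⟩
  have hfin := ((continuous_infDist_pt (⋂ i, C i)).tendsto a).comp hxconv
  rwa [Metric.infDist_zero_of_mem haI] at hfin
end

section
/- Let T : H → H be a ρ-strongly quasi-nonexpansive operator with ρ ∈ [0,1] and Fix T ≠ ∅, let ε ∈ (0,1], and let λ ∈ [ε, 1+ρ-ε] ⊆ (0, 1+ρ). Then the λ-relaxation T_λ = (1-λ)Id + λT satisfies ‖T_λ(x) - z‖² ≤ ‖x - z‖² - (ε/(1+ρ-ε))‖T_λ(x) - x‖² for all x ∈ H and z ∈ Fix T. -/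
open scoped RealInnerProductSpace

/-- The λ-relaxation of a ρ-strongly quasi-nonexpansive operator, with
λ ∈ [ε, 1+ρ-ε], is (ε/(1+ρ-ε))-strongly quasi-nonexpansive w.r.t. Fix T. -/
theorem relaxation_sqne_bound
    {H : Type*} [NormedAddCommGroup H] [InnerProductSpace ℝ H]
    (T : H → H) (ρ : ℝ) (hρ0 : 0 ≤ ρ) (hρ1 : ρ ≤ 1)
    (hT : ∀ (x z : H), T z = z →
      ‖T x - z‖ ^ 2 ≤ ‖x - z‖ ^ 2 - ρ * ‖T x - x‖ ^ 2)
    (hfix : ∃ z : H, T z = z)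
    (ε : ℝ) (hε0 : 0 < ε) (hε1 : ε ≤ 1)
    (l : ℝ) (hl : l ∈ Set.Icc ε (1 + ρ - ε)) :
    ∀ (x z : H), T z = z →
      ‖((1 - l) • x + l • T x) - z‖ ^ 2 ≤
        ‖x - z‖ ^ 2 - (ε / (1 + ρ - ε)) * ‖((1 - l) • x + l • T x) - x‖ ^ 2 := by
  intro x z hz
  obtain ⟨hl1, hl2⟩ := hl
  have h1 := hT x z hz
  set v := T x - x with hv
  have hTz : T x - z = (x - z) + v := by rw [hv]; abel
  have h2 : ‖(x - z) + v‖ ^ 2 = ‖x - z‖ ^ 2 + 2 * (inner ℝ (x - z) v : ℝ) + ‖v‖ ^ 2 := by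
    rw [norm_add_sq_real]
  have h3 : ((1 - l) • x + l • T x) - z = (x - z) + l • v := by
    rw [hv]; module
  have h4 : ((1 - l) • x + l • T x) - x = l • v := by
    rw [hv]; module
  have h5 : ‖(x - z) + l • v‖ ^ 2
      = ‖x - z‖ ^ 2 + 2 * l * (inner ℝ (x - z) v : ℝ) + l ^ 2 * ‖v‖ ^ 2 := by
    rw [norm_add_sq_real, real_inner_smul_right, norm_smul, mul_pow, Real.norm_eq_abs,
      sq_abs]; ring
  have h6 : ‖l • v‖ ^ 2 = l ^ 2 * ‖v‖ ^ 2 := by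
    rw [norm_smul, mul_pow, Real.norm_eq_abs, sq_abs]
  rw [h3, h4, h5, h6]
  rw [hTz, h2] at h1
  -- h1 : 2⟨x-z,v⟩ + ‖v‖² ≤ -ρ‖v‖²
  have hd : 0 < 1 + ρ - ε := lt_of_lt_of_le hε0 (le_trans hl1 hl2)
  have hl0 : 0 < l := lt_of_lt_of_le hε0 hl1
  have key : ε / (1 + ρ - ε) * l ^ 2 ≤ l * (1 + ρ - l) := by
    rw [div_mul_eq_mul_div, div_le_iff₀ hd]
    nlinarith [mul_le_mul_of_nonneg_left hl2 hε0.le,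
      mul_le_mul_of_nonneg_right hl2 (by linarith : (0:ℝ) ≤ 1 + ρ - l)]
  nlinarith [sq_nonneg ‖v‖, mul_le_mul_of_nonneg_left h1 hl0.le,
    mul_le_mul_of_nonneg_right key (sq_nonneg ‖v‖)]
end

section
/- Let {T_k}_{k=0}^∞ be ρ-strongly quasi-nonexpansive operators on H (ρ ∈ [0,1]) with F := ⋂_k Fix T_k ≠ ∅, let ε ∈ (0,1], and let λ_k ∈ [ε, 1+ρ-ε]. Then for any x⁰ ∈ H, the sequence x^{k+1} := x^k + λ_k(T_k(x^k) - x^k) is strongly Fejér monotone with respect to F with constant ε/(1+ρ-ε), i.e., ‖x^{k+1} - z‖² ≤ ‖x^k - z‖² - (ε/(1+ρ-ε))‖x^{k+1}-x^k‖² for all z ∈ F and k; consequently ‖x^{k+1} - x^k‖ → 0. -/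
open Filter

/-- Relaxed iterations of ρ-strongly quasi-nonexpansive operators with a common fixed
point are strongly Fejér monotone with constant ε/(1+ρ-ε), and consecutive
differences tend to zero. -/
theorem relaxed_iterations_strongly_fejer
    {H : Type*} [NormedAddCommGroup H] [InnerProductSpace ℝ H]
    (T : ℕ → H → H) (ρ : ℝ) (hρ0 : 0 ≤ ρ) (hρ1 : ρ ≤ 1)
    (hT : ∀ k, ∀ (x z : H), T k z = z →
      ‖T k x - z‖ ^ 2 ≤ ‖x - z‖ ^ 2 - ρ * ‖T k x - x‖ ^ 2)
    (F : Set H) (hF : F = ⋂ k, {z : H | T k z = z}) (hFne : F.Nonempty)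
    (ε : ℝ) (hε0 : 0 < ε) (hε1 : ε ≤ 1)
    (l : ℕ → ℝ) (hl : ∀ k, l k ∈ Set.Icc ε (1 + ρ - ε))
    (x : ℕ → H) (hx : ∀ k, x (k + 1) = x k + l k • (T k (x k) - x k)) :
    (∀ z ∈ F, ∀ k : ℕ,
      ‖x (k + 1) - z‖ ^ 2 ≤
        ‖x k - z‖ ^ 2 - (ε / (1 + ρ - ε)) * ‖x (k + 1) - x k‖ ^ 2) ∧
    Tendsto (fun k => ‖x (k + 1) - x k‖) atTop (nhds 0) := by
  have hle : ε ≤ 1 + ρ - ε := le_trans (hl 0).1 (hl 0).2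
  have hpos : 0 < 1 + ρ - ε := lt_of_lt_of_le hε0 hle
  set α : ℝ := ε / (1 + ρ - ε) with hα
  have hαpos : 0 < α := div_pos hε0 hpos
  have key : ∀ z ∈ F, ∀ k : ℕ,
      ‖x (k + 1) - z‖ ^ 2 ≤ ‖x k - z‖ ^ 2 - α * ‖x (k + 1) - x k‖ ^ 2 := by
    intro z hz k
    have hzfix : T k z = z := by
      rw [hF] at hz
      exact Set.mem_iInter.mp hz k
    set d : H := T k (x k) - x k with hd
    have hTd : T k (x k) - z = (x k - z) + d := by abel_nf; rw [hd]; abel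
    have hxd : x (k + 1) - z = (x k - z) + l k • d := by rw [hx k]; abel
    have hxx : x (k + 1) - x k = l k • d := by rw [hx k]; abel
    have expand1 : ‖T k (x k) - z‖ ^ 2
        = ‖x k - z‖ ^ 2 + 2 * inner ℝ (x k - z) d + ‖d‖ ^ 2 := by
      rw [hTd, @norm_add_sq_real]
    have expand2 : ‖x (k + 1) - z‖ ^ 2
        = ‖x k - z‖ ^ 2 + 2 * (l k * inner ℝ (x k - z) d) + (l k)^2 * ‖d‖ ^ 2 := by
      rw [hxd, @norm_add_sq_real, real_inner_smul_right, norm_smul]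
      ring_nf
      rw [Real.norm_eq_abs, sq_abs]
    have hnd : ‖x (k + 1) - x k‖ ^ 2 = (l k)^2 * ‖d‖^2 := by
      rw [hxx, norm_smul]
      rw [mul_pow, Real.norm_eq_abs, sq_abs]
    have hineq := hT k (x k) z hzfix
    rw [expand1] at hineq
    have hinner : 2 * inner ℝ (x k - z) d ≤ -(1 + ρ) * ‖d‖^2 := by nlinarith
    rw [expand2, hnd]
    have hlk := hl k
    have h1 : ε ≤ l k := hlk.1
    have h2 : l k ≤ 1 + ρ - ε := hlk.2
    have hlkpos : 0 < l k := lt_of_lt_of_le hε0 h1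
    have hcoef : α * (l k)^2 ≤ l k * (1 + ρ - l k) := by
      rw [hα, div_mul_eq_mul_div, div_le_iff₀ hpos]
      have s1 : ε * l k ^ 2 ≤ ε * (l k * (1 + ρ - ε)) := by
        nlinarith [mul_le_mul_of_nonneg_left h2 (mul_pos hε0 hlkpos).le]
      have s2 : ε * (l k * (1 + ρ - ε)) ≤ (1 + ρ - l k) * (l k * (1 + ρ - ε)) := by
        apply mul_le_mul_of_nonneg_right (by linarith)
        positivity
      nlinarith [s1, s2]
    nlinarith [sq_nonneg ‖d‖, mul_nonneg (sq_nonneg (l k)) (sq_nonneg ‖d‖)]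
  refine ⟨key, ?_⟩
  obtain ⟨z, hz⟩ := hFne
  set a : ℕ → ℝ := fun k => ‖x k - z‖ ^ 2 with ha
  have hstep : ∀ k, a (k + 1) ≤ a k - α * ‖x (k + 1) - x k‖ ^ 2 := key z hz
  have hanti : Antitone a := antitone_nat_of_succ_le (fun k => by
    have := hstep k
    nlinarith [sq_nonneg ‖x (k + 1) - x k‖])
  have hbdd : BddBelow (Set.range a) := ⟨0, by rintro _ ⟨k, rfl⟩; positivity⟩
  have hconv : Tendsto a atTop (nhds (⨅ k, a k)) :=
    tendsto_atTop_ciInf hanti hbdd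
  have hconv' : Tendsto (fun k => a (k + 1)) atTop (nhds (⨅ k, a k)) :=
    hconv.comp (tendsto_add_atTop_nat 1)
  have hdiff : Tendsto (fun k => a k - a (k + 1)) atTop (nhds 0) := by
    have := hconv.sub hconv'
    simpa using this
  have hsq : Tendsto (fun k => ‖x (k + 1) - x k‖ ^ 2) atTop (nhds 0) := by
    have hub : ∀ k, ‖x (k + 1) - x k‖ ^ 2 ≤ (a k - a (k + 1)) / α := fun k => by
      rw [le_div_iff₀ hαpos]
      nlinarith [hstep k]
    have hdiv : Tendsto (fun k => (a k - a (k + 1)) / α) atTop (nhds 0) := by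
      simpa using hdiff.div_const α
    exact squeeze_zero (fun k => sq_nonneg _) hub hdiv
  have h : Tendsto (fun k => Real.sqrt (‖x (k + 1) - x k‖ ^ 2)) atTop (nhds 0) := by
    have := (Real.continuous_sqrt.tendsto 0).comp hsq
    simpa [Function.comp_def] using this
  exact h.congr (fun k => Real.sqrt_sq (norm_nonneg _))
end

section
/- Let φ : H → ℝ be convex and continuous, C ⊆ H nonempty, and y, z ∈ C with z ∈ Argmin_{x∈C} φ(x) and y ∉ Argmin_{x∈C} φ(x). Then there exist r₁ > 0 and r₂ > 0 such that for each ȳ ∈ B(y, r₁) and each v ∈ ∂φ(ȳ): (i) 0 ∉ ∂φ(ȳ) and ⟨v/‖v‖, z̄ - ȳ⟩ < 0 for each z̄ ∈ B(z, r₂); (ii) ⟨v/‖v‖, z - ȳ⟩ < -r₂/2. -/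
open scoped RealInnerProductSpace

/-- Subdifferential of a real-valued function on a real Hilbert space. -/
def subdiff {H : Type*} [NormedAddCommGroup H] [InnerProductSpace ℝ H]
    (φ : H → ℝ) (x : H) : Set H :=
  {g : H | ∀ y : H, ⟪g, y - x⟫ ≤ φ y - φ x}

/-- Key subgradient lemma near a non-minimizing limit point. -/
theorem subgradient_lemma
    {H : Type*} [NormedAddCommGroup H] [InnerProductSpace ℝ H]
    (φ : H → ℝ) (hconv : ConvexOn ℝ Set.univ φ) (hcont : Continuous φ)
    (C : Set H) (hC : C.Nonempty) (y z : H) (hyC : y ∈ C) (hzC : z ∈ C)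
    (hz : ∀ w ∈ C, φ z ≤ φ w)
    (hy : ¬ (∀ w ∈ C, φ y ≤ φ w)) :
    ∃ r₁ > (0 : ℝ), ∃ r₂ > (0 : ℝ),
      ∀ ybar ∈ Metric.ball y r₁, ∀ v ∈ subdiff φ ybar,
        (0 ∉ subdiff φ ybar) ∧
        (∀ zbar ∈ Metric.ball z r₂, ⟪‖v‖⁻¹ • v, zbar - ybar⟫ < 0) ∧
        ⟪‖v‖⁻¹ • v, z - ybar⟫ < -(r₂ / 2) := by
  push_neg at hy
  obtain ⟨w, hwC, hw⟩ := hy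
  have hzy : φ z < φ y := lt_of_le_of_lt (hz w hwC) hw
  have hε0 : 0 < (φ y - φ z) / 3 := by linarith
  obtain ⟨r₁, hr₁, hball1⟩ := Metric.continuousAt_iff.mp (hcont.continuousAt (x := y)) _ hε0
  obtain ⟨r₂, hr₂, hball2⟩ := Metric.continuousAt_iff.mp (hcont.continuousAt (x := z)) _ hε0
  refine ⟨r₁, hr₁, r₂, hr₂, ?_⟩
  intro ybar hybar v hv
  have hφy : φ y - (φ y - φ z) / 3 < φ ybar := by
    have h := hball1 (Metric.mem_ball.mp hybar)
    rw [Real.dist_eq] at h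
    have h' := abs_lt.mp h
    linarith [h'.1]
  have key : ∀ zbar ∈ Metric.ball z r₂, φ zbar - φ ybar < -((φ y - φ z) / 3) := by
    intro zbar hzbar
    have h := hball2 (Metric.mem_ball.mp hzbar)
    rw [Real.dist_eq] at h
    have h' := abs_lt.mp h
    linarith [h'.2]
  have hz0 : z ∈ Metric.ball z r₂ := Metric.mem_ball_self hr₂
  have h0notin : (0 : H) ∉ subdiff φ ybar := by
    intro h0
    have h1 := h0 z
    rw [inner_zero_left] at h1
    have h2 := key z hz0
    linarith
  have hvne : v ≠ 0 := fun h => h0notin (h ▸ hv)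
  have hvpos : (0 : ℝ) < ‖v‖ := norm_pos_iff.mpr hvne
  have hinvpos : (0 : ℝ) < ‖v‖⁻¹ := inv_pos.mpr hvpos
  have hkey2 : ∀ zbar ∈ Metric.ball z r₂, ⟪v, zbar - ybar⟫ < -((φ y - φ z) / 3) := by
    intro zbar hzbar
    exact lt_of_le_of_lt (hv zbar) (key zbar hzbar)
  refine ⟨h0notin, ?_, ?_⟩
  · intro zbar hzbar
    rw [real_inner_smul_left]
    have := hkey2 zbar hzbar
    exact mul_neg_of_pos_of_neg hinvpos (by linarith)
  · set zbar := z + (r₂ / 2) • (‖v‖⁻¹ • v) with hzbardef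
    have hmem : zbar ∈ Metric.ball z r₂ := by
      rw [Metric.mem_ball, dist_eq_norm]
      have : zbar - z = (r₂ / 2) • (‖v‖⁻¹ • v) := by rw [hzbardef]; abel
      rw [this, norm_smul, norm_smul, norm_inv, norm_norm]
      rw [Real.norm_eq_abs, abs_of_pos (by linarith : (0:ℝ) < r₂ / 2)]
      rw [inv_mul_cancel₀ (ne_of_gt hvpos)]
      linarith
    have hcomp : ⟪v, zbar - ybar⟫ = ⟪v, z - ybar⟫ + (r₂ / 2) * ‖v‖ := by
      have : zbar - ybar = (z - ybar) + (r₂ / 2) • (‖v‖⁻¹ • v) := by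
        rw [hzbardef]; abel
      rw [this, inner_add_right, real_inner_smul_right, real_inner_smul_right,
        real_inner_self_eq_norm_sq]
      field_simp
    have hlt : ⟪v, z - ybar⟫ < -((r₂ / 2) * ‖v‖) := by
      have := hkey2 zbar hmem
      rw [hcomp] at this
      linarith
    rw [real_inner_smul_left]
    have h2 : ‖v‖⁻¹ * ⟪v, z - ybar⟫ < ‖v‖⁻¹ * (-((r₂ / 2) * ‖v‖)) :=
      (mul_lt_mul_iff_right₀ hinvpos).mpr hlt
    have h3 : ‖v‖⁻¹ * (-((r₂ / 2) * ‖v‖)) = -(r₂ / 2) := by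
      field_simp
    linarith
end

section
/- Let φ : H → ℝ be convex and continuous, {𝒯_k} nonexpansive operators with a common fixed point, F := ⋂_k Fix 𝒯_k, and suppose the superiorization iterates y^{k+1} := 𝒯_k(y^k + Σ_{n=1}^{M_k} β_{k,n} v^{k,n}) (with Σ_k Σ_n β_{k,n} < ∞ and each v^{k,n} a unit negative subgradient direction or 0 as in the SM scheme) converge in norm to y ∈ F. Then either y ∈ Argmin_{x∈F} φ(x), or there exists k₀ such that ‖y^{k+1} - z‖ < ‖y^k - z‖ for every z ∈ Argmin_{x∈F} φ(x) and all k ≥ k₀. -/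
open Filter
open scoped RealInnerProductSpace

/-- Theorem of alternatives for the superiorized iterates: either the norm limit is a
minimizer of φ over the common fixed point set, or the iterates are eventually strictly
Fejér monotone with respect to the set of such minimizers. -/
theorem superiorization_alternatives
    {H : Type*} [NormedAddCommGroup H] [InnerProductSpace ℝ H]
    (φ : H → ℝ) (hconv : ConvexOn ℝ Set.univ φ) (hcont : Continuous φ)
    (T : ℕ → H → H)
    (hTne : ∀ k, ∀ x y : H, ‖T k x - T k y‖ ≤ ‖x - y‖)
    (F : Set H) (hF : F = ⋂ k, {z : H | T k z = z}) (hFne : F.Nonempty)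
    (M : ℕ → ℕ) (hM : ∀ k, 0 < M k)
    (β : ℕ → ℕ → ℝ) (hβpos : ∀ k, ∀ n ∈ Finset.Icc 1 (M k), 0 < β k n)
    (hβsum : Summable (fun k => ∑ n ∈ Finset.Icc 1 (M k), β k n))
    (v : ℕ → ℕ → H)
    (y : ℕ → H)
    (hrec : ∀ k, y (k + 1) =
      T k (y k + ∑ n ∈ Finset.Icc 1 (M k), β k n • v k n))
    (hvnorm : ∀ k n, ‖v k n‖ ≤ 1)
    (hv : ∀ k, ∀ n < M k,
      (0 ∉ subdiff φ (y k + ∑ i ∈ Finset.Icc 1 n, β k i • v k i) →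
        ∃ s ∈ subdiff φ (y k + ∑ i ∈ Finset.Icc 1 n, β k i • v k i),
          s ≠ 0 ∧ v k (n + 1) = -(‖s‖⁻¹ • s)) ∧
      (0 ∈ subdiff φ (y k + ∑ i ∈ Finset.Icc 1 n, β k i • v k i) →
        v k (n + 1) = 0))
    (ylim : H) (hylim : ylim ∈ F) (hyconv : Tendsto y atTop (nhds ylim)) :
    (ylim ∈ F ∧ ∀ w ∈ F, φ ylim ≤ φ w) ∨
    (∃ k₀ : ℕ, ∀ k ≥ k₀, ∀ z : H,
      (z ∈ F ∧ ∀ w ∈ F, φ z ≤ φ w) →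
        ‖y (k + 1) - z‖ < ‖y k - z‖) := by
  by_cases h1 : ∀ w ∈ F, φ ylim ≤ φ w
  · exact Or.inl ⟨hylim, h1⟩
  right
  by_cases hA : ∃ z, z ∈ F ∧ ∀ w ∈ F, φ z ≤ φ w
  swap
  · exact ⟨0, fun k _ z hz => absurd ⟨z, hz⟩ hA⟩
  obtain ⟨z₀, hz₀F, hz₀min⟩ := hA
  push_neg at h1
  obtain ⟨w, hwF, hw⟩ := h1
  have hδpos : 0 < φ ylim - φ z₀ := by
    have := hz₀min w hwF
    linarith
  set δ : ℝ := φ ylim - φ z₀ with hδdef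
  -- continuity at ylim
  have hcA : ContinuousAt φ ylim := hcont.continuousAt
  rw [Metric.continuousAt_iff] at hcA
  obtain ⟨r, hrpos, hrb⟩ := hcA (min 1 (δ / 2)) (lt_min one_pos (by linarith))
  have hφlo : ∀ x : H, ‖x - ylim‖ < r → φ ylim - δ / 2 < φ x := by
    intro x hx
    have h := hrb (show dist x ylim < r by rwa [dist_eq_norm])
    rw [Real.dist_eq] at h
    have h2 := (abs_lt.mp h).1
    have h3 : min 1 (δ / 2) ≤ δ / 2 := min_le_right _ _
    linarith
  have hφhi : ∀ x : H, ‖x - ylim‖ < r → φ x < φ ylim + 1 := by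
    intro x hx
    have h := hrb (show dist x ylim < r by rwa [dist_eq_norm])
    rw [Real.dist_eq] at h
    have h2 := (abs_lt.mp h).2
    have h3 : min 1 (δ / 2) ≤ 1 := min_le_left _ _
    linarith
  set L : ℝ := (2 + δ) / r with hLdef
  have hLpos : 0 < L := by positivity
  set γ : ℝ := (δ / 2) / L with hγdef
  have hγpos : 0 < γ := by positivity
  -- key single-step decrease lemma
  have key : ∀ x : H, ‖x - ylim‖ < r / 2 → ∀ s : H, s ∈ subdiff φ x → s ≠ 0 →
      ∀ z : H, φ z ≤ φ z₀ → ∀ b : ℝ, 0 < b → b ≤ γ →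
      ‖x + b • (-(‖s‖⁻¹ • s)) - z‖ < ‖x - z‖ := by
    intro x hx s hs hs0 z hz b hb hbγ
    have hsn : 0 < ‖s‖ := norm_pos_iff.mpr hs0
    have hxr : ‖x - ylim‖ < r := lt_of_lt_of_le hx (by linarith)
    -- bound ‖s‖ ≤ L
    have hsL : ‖s‖ ≤ L := by
      have hu := hs (x + (r / 2) • (‖s‖⁻¹ • s))
      have hinner : ⟪s, (x + (r / 2) • (‖s‖⁻¹ • s)) - x⟫ = (r / 2) * ‖s‖ := by
        rw [add_sub_cancel_left, inner_smul_right, inner_smul_right,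
          real_inner_self_eq_norm_sq]
        field_simp
      have hnu : ‖(r / 2) • (‖s‖⁻¹ • s)‖ = r / 2 := by
        rw [norm_smul, norm_smul, norm_inv, norm_norm, Real.norm_eq_abs,
          abs_of_pos (by positivity)]
        field_simp
      have hnear : ‖(x + (r / 2) • (‖s‖⁻¹ • s)) - ylim‖ < r := by
        have : (x + (r / 2) • (‖s‖⁻¹ • s)) - ylim
            = (x - ylim) + (r / 2) • (‖s‖⁻¹ • s) := by abel
        rw [this]
        calc ‖(x - ylim) + (r / 2) • (‖s‖⁻¹ • s)‖
            ≤ ‖x - ylim‖ + ‖(r / 2) • (‖s‖⁻¹ • s)‖ := norm_add_le _ _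
          _ < r / 2 + r / 2 := by rw [hnu]; linarith
          _ = r := by ring
      have h5 := hφhi _ hnear
      have h6 := hφlo x hxr
      rw [hinner] at hu
      have h7 : (r / 2) * ‖s‖ ≤ 1 + δ / 2 := by linarith
      rw [hLdef, le_div_iff₀ hrpos]
      nlinarith
    -- subgradient inequality at z
    have hsz : δ / 2 ≤ ⟪s, x - z⟫ := by
      have h8 := hs z
      have h9 : ⟪s, z - x⟫ = -⟪s, x - z⟫ := by
        rw [← inner_neg_right, neg_sub]
      rw [h9] at h8
      have h6 := hφlo x hxr
      linarith
    -- inner product bound for the step direction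
    have hvin : ⟪x - z, b • (-(‖s‖⁻¹ • s))⟫ ≤ -(b * γ) := by
      have hsym : ⟪x - z, s⟫ = ⟪s, x - z⟫ := real_inner_comm _ _
      rw [inner_smul_right, inner_neg_right, inner_smul_right, hsym]
      have h10 : γ ≤ ‖s‖⁻¹ * ⟪s, x - z⟫ := by
        rw [hγdef]
        calc δ / 2 / L ≤ ⟪s, x - z⟫ / ‖s‖ :=
              div_le_div₀ (le_trans (by linarith) hsz) hsz hsn hsL
          _ = ‖s‖⁻¹ * ⟪s, x - z⟫ := by rw [div_eq_inv_mul]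
      nlinarith
    -- norm of the step
    have hnv : ‖b • (-(‖s‖⁻¹ • s))‖ = b := by
      rw [norm_smul, norm_neg, norm_smul, norm_inv, norm_norm, Real.norm_eq_abs,
        abs_of_pos hb]
      field_simp
    have hsq : ‖x + b • (-(‖s‖⁻¹ • s)) - z‖ ^ 2 < ‖x - z‖ ^ 2 := by
      have hre : x + b • (-(‖s‖⁻¹ • s)) - z = (x - z) + b • (-(‖s‖⁻¹ • s)) := by abel
      rw [hre, norm_add_sq_real, hnv]
      nlinarith
    exact lt_of_pow_lt_pow_left₀ 2 (norm_nonneg _) hsq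
  -- eventually small quantities
  obtain ⟨N1, hN1⟩ := Metric.tendsto_atTop.mp hyconv (r / 4) (by positivity)
  have hB0 : Tendsto (fun k => ∑ n ∈ Finset.Icc 1 (M k), β k n) atTop (nhds 0) :=
    hβsum.tendsto_atTop_zero
  obtain ⟨N2, hN2⟩ := Metric.tendsto_atTop.mp hB0 (min (r / 4) γ)
    (lt_min (by positivity) hγpos)
  refine ⟨max N1 N2, fun k hk z hzmem => ?_⟩
  obtain ⟨hzF, hzmin⟩ := hzmem
  have hzz₀ : φ z ≤ φ z₀ := hzmin z₀ hz₀F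
  have hyk : ‖y k - ylim‖ < r / 4 := by
    have := hN1 k (le_trans (le_max_left _ _) hk)
    rwa [dist_eq_norm] at this
  have hBk : ∑ n ∈ Finset.Icc 1 (M k), β k n < min (r / 4) γ := by
    have := hN2 k (le_trans (le_max_right _ _) hk)
    rw [Real.dist_eq, sub_zero] at this
    exact lt_of_le_of_lt (le_abs_self _) this
  have hBk1 : ∑ n ∈ Finset.Icc 1 (M k), β k n < r / 4 :=
    lt_of_lt_of_le hBk (min_le_left _ _)
  have hBk2 : ∑ n ∈ Finset.Icc 1 (M k), β k n < γ :=
    lt_of_lt_of_le hBk (min_le_right _ _)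
  set x : ℕ → H := fun n => y k + ∑ i ∈ Finset.Icc 1 n, β k i • v k i with hxdef
  -- all intermediate points are close to ylim
  have hxnear : ∀ n ≤ M k, ‖x n - ylim‖ < r / 2 := by
    intro n hn
    have hsum : ‖∑ i ∈ Finset.Icc 1 n, β k i • v k i‖
        ≤ ∑ i ∈ Finset.Icc 1 (M k), β k i := by
      calc ‖∑ i ∈ Finset.Icc 1 n, β k i • v k i‖
          ≤ ∑ i ∈ Finset.Icc 1 n, ‖β k i • v k i‖ := norm_sum_le _ _
        _ ≤ ∑ i ∈ Finset.Icc 1 n, β k i := by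
            apply Finset.sum_le_sum
            intro i hi
            have hib : i ∈ Finset.Icc 1 (M k) :=
              Finset.Icc_subset_Icc_right hn hi
            have hpos := hβpos k i hib
            rw [norm_smul, Real.norm_eq_abs, abs_of_pos hpos]
            exact mul_le_of_le_one_right hpos.le (hvnorm k i)
        _ ≤ ∑ i ∈ Finset.Icc 1 (M k), β k i :=
            Finset.sum_le_sum_of_subset_of_nonneg
              (Finset.Icc_subset_Icc_right hn)
              (fun i hi _ => (hβpos k i hi).le)
    have hre : x n - ylim = (y k - ylim) + ∑ i ∈ Finset.Icc 1 n, β k i • v k i := by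
      simp only [hxdef]; abel
    calc ‖x n - ylim‖ ≤ ‖y k - ylim‖ + ‖∑ i ∈ Finset.Icc 1 n, β k i • v k i‖ := by
          rw [hre]; exact norm_add_le _ _
      _ < r / 4 + r / 4 := by
          have := lt_of_le_of_lt hsum hBk1
          linarith
      _ = r / 2 := by ring
  -- zero is never a subgradient at intermediate points
  have hnotmin : ∀ n ≤ M k, 0 ∉ subdiff φ (x n) := by
    intro n hn h0
    have h1 : φ (x n) ≤ φ z₀ := by
      have := h0 z₀
      rw [inner_zero_left] at this
      linarith
    have h2 : φ ylim - δ / 2 < φ (x n) :=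
      hφlo (x n) (lt_trans (hxnear n hn) (by linarith))
    rw [hδdef] at h2
    linarith
  -- each inner step strictly decreases distance to z
  have hdecr : ∀ n, n < M k → ‖x (n + 1) - z‖ < ‖x n - z‖ := by
    intro n hn
    obtain ⟨hcase, _⟩ := hv k n hn
    obtain ⟨s, hs, hs0, hvs⟩ := hcase (hnotmin n hn.le)
    have hx1 : x (n + 1) = x n + β k (n + 1) • v k (n + 1) := by
      rw [hxdef]
      simp only
      rw [Finset.sum_Icc_succ_top (Nat.succ_le_succ (Nat.zero_le n))]
      abel
    have hmem : n + 1 ∈ Finset.Icc 1 (M k) := by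
      rw [Finset.mem_Icc]; omega
    have hbpos := hβpos k (n + 1) hmem
    have hble : β k (n + 1) ≤ γ := by
      have hle : β k (n + 1) ≤ ∑ i ∈ Finset.Icc 1 (M k), β k i :=
        Finset.single_le_sum (fun i hi => (hβpos k i hi).le) hmem
      linarith
    rw [hx1, hvs]
    exact key (x n) (hxnear n hn.le) s hs hs0 z hzz₀ (β k (n + 1)) hbpos hble
  -- iterate the decrease
  have hmono : ∀ n ≤ M k, 1 ≤ n → ‖x n - z‖ < ‖x 0 - z‖ := by
    intro n
    induction n with
    | zero => intro _ h; omega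
    | succ m ih =>
      intro hle _
      rcases Nat.eq_zero_or_pos m with hm | hm
      · subst hm; exact hdecr 0 (hM k)
      · exact lt_trans (hdecr m (by omega)) (ih (by omega) hm)
  have hx0 : x 0 = y k := by simp [hxdef]
  have hxM : x (M k) = y k + ∑ n ∈ Finset.Icc 1 (M k), β k n • v k n := rfl
  have hzfix : T k z = z := by
    rw [hF] at hzF
    exact Set.mem_iInter.mp hzF k
  calc ‖y (k + 1) - z‖ = ‖T k (x (M k)) - T k z‖ := by rw [hrec k, hzfix, hxM]
    _ ≤ ‖x (M k) - z‖ := hTne k _ z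
    _ < ‖x 0 - z‖ := hmono (M k) le_rfl (hM k)
    _ = ‖y k - z‖ := by rw [hx0]
end
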